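/- arXiv:2202.03174 — 2 statements merged into one kernel-verified Lean document; each statement's English description precedes it below -/
import Mathlib

section
/- Let (X,r) be a left non-degenerate set-theoretic solution of the YBE, M = M(X,r) with its two operations + and ∘, and μ the congruence defined by the iterative construction below. Then for all (a,b) ∈ μ and (c,d) ∈ μ one has (λ'_c(a), λ'_d(b)) ∈ μ and ((λ'_c)^{-1}(a), (λ'_d)^{-1}(b)) ∈ μ. -/
open scoped Classical

section YBEDefs

variable {X : Type*}

/-- First component `σ_x(y)` of `r (x, y)`. -/
def ybeSigma (r : X × X → X × X) (x y : X) : X := (r (x, y)).1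

/-- Second component `γ_y(x)` of `r (x, y)`. -/
def ybeGamma (r : X × X → X × X) (y x : X) : X := (r (x, y)).2

/-- `r` acting on the first two components of `X³`. -/
def yb12 (r : X × X → X × X) : X × X × X → X × X × X :=
  fun p => ((r (p.1, p.2.1)).1, ((r (p.1, p.2.1)).2, p.2.2))

/-- `r` acting on the last two components of `X³`. -/
def yb23 (r : X × X → X × X) : X × X × X → X × X × X :=
  fun p => (p.1, r p.2)

/-- `(X, r)` is a set-theoretic solution of the Yang–Baxter equation. -/
def IsYBE (r : X × X → X × X) : Prop :=
  yb12 r ∘ yb23 r ∘ yb12 r = yb23 r ∘ yb12 r ∘ yb23 r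

/-- left non-degenerate: all `σ_x` are bijective. -/
def IsLeftND (r : X × X → X × X) : Prop := ∀ x, Function.Bijective (ybeSigma r x)

/-- right non-degenerate: all `γ_y` are bijective. -/
def IsRightND (r : X × X → X × X) : Prop := ∀ y, Function.Bijective (ybeGamma r y)

/-- The defining relations `x∘y = σ_x(y) ∘ γ_y(x)` of the structure monoid. -/
def structRel (r : X × X → X × X) : FreeMonoid X → FreeMonoid X → Prop :=
  fun a b => ∃ x y : X, a = FreeMonoid.of x * FreeMonoid.of y ∧
    b = FreeMonoid.of (ybeSigma r x y) * FreeMonoid.of (ybeGamma r y x)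

/-- The congruence on the free monoid generated by the defining relations. -/
def structCon (r : X × X → X × X) : Con (FreeMonoid X) := conGen (structRel r)

/-- The (multiplicative) structure monoid `M(X, r)`. -/
abbrev SM (r : X × X → X × X) := (structCon r).Quotient

/-- The canonical image of a generator `x ∈ X` in `M(X, r)`. -/
def ofSM (r : X × X → X × X) (x : X) : SM r := (structCon r).mk' (FreeMonoid.of x)

/-- The left derived solution `r'(x,y) = (y, σ_y γ_{σ_x⁻¹(y)}(x))`. -/
noncomputable def derivedR (r : X × X → X × X) : X × X → X × X := fun p =>
  haveI : Nonempty X := ⟨p.1⟩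
  (p.2, ybeSigma r p.2 (ybeGamma r (Function.invFun (ybeSigma r p.1) p.2) p.1))

/-- The defining relations `x + y = y + σ_y γ_{σ_x⁻¹(y)}(x)` of the derived
structure monoid, written additively. -/
def derivedRel (r : X × X → X × X) : FreeAddMonoid X → FreeAddMonoid X → Prop :=
  fun a b => ∃ x y : X, a = FreeAddMonoid.of x + FreeAddMonoid.of y ∧
    b = FreeAddMonoid.of ((derivedR r (x, y)).1) + FreeAddMonoid.of ((derivedR r (x, y)).2)

/-- The additive congruence generated by the derived relations. -/
noncomputable def derivedAddCon (r : X × X → X × X) : AddCon (FreeAddMonoid X) :=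
  addConGen (derivedRel r)

/-- The additive structure monoid `A(X, r) = M(X, r')`. -/
noncomputable abbrev AM (r : X × X → X × X) := (derivedAddCon r).Quotient

/-- The canonical image of a generator `x ∈ X` in `A(X, r)`. -/
noncomputable def ofAM (r : X × X → X × X) (x : X) : AM r :=
  (derivedAddCon r).mk' (FreeAddMonoid.of x)

end YBEDefs

/-- The multiplicative group structure that older Mathlib put on `AddAut A`
(composition, `(e₁ * e₂) x = e₁ (e₂ x)`, inverse `symm`); Mathlib now makes it additive. -/
instance addAutGroupOld (A : Type*) [Add A] : Group (AddAut A) where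
  mul g h := AddEquiv.trans h g
  one := AddEquiv.refl _
  inv := AddEquiv.symm
  mul_assoc _ _ _ := rfl
  one_mul _ := rfl
  mul_one _ := rfl
  inv_mul_cancel e := AddEquiv.ext e.symm_apply_apply

section MuDefs

variable {X : Type*}

/-- The multiplication `a ∘ b = a + λ'_a(b)` of `M(X,r)` transported to
`A(X,r)` via the identification `π`. -/
noncomputable def opA (r : X × X → X × X) (lam : SM r →* AddAut (AM r)) (pi : SM r ≃ AM r)
    (a b : AM r) : AM r :=
  a + lam (pi.symm a) b

/-- The map `λ'` indexed by elements of `A(X,r)` via the identification `π`. -/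
noncomputable def lamA (r : X × X → X × X) (lam : SM r →* AddAut (AM r)) (pi : SM r ≃ AM r)
    (a : AM r) : AddAut (AM r) :=
  lam (pi.symm a)

/-- The relations `μ₀, μ₁, μ₂, …` of the iterative construction:
`μ₀ = {(a,b) : ∃ c, c + a = c + b}`; `μ_{4m+1}` is the transitive closure of `μ_{4m}`;
`μ_{4m+2} = {((λ'_z)^ε(a∘c), (λ'_z)^ε(b∘c)) : z, c ∈ M, ε ∈ {-1,1}, (a,b) ∈ μ_{4m+1}}`;
`μ_{4m+3}` is the transitive closure of `μ_{4m+2}`;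
`μ_{4m+4} = {(c+a+d, c+b+d) : (a,b) ∈ μ_{4m+3}} ∪ {(a,b) : ∃ c, (c+a, c+b) ∈ μ_{4m+3}}`. -/
def muN (r : X × X → X × X) (lam : SM r →* AddAut (AM r)) (pi : SM r ≃ AM r) :
    ℕ → AM r → AM r → Prop
  | 0 => fun a b => ∃ c : AM r, c + a = c + b
  | n + 1 =>
    if n % 4 = 0 ∨ n % 4 = 2 then Relation.TransGen (muN r lam pi n)
    else if n % 4 = 1 then
      fun u v => ∃ (z : SM r) (c a b : AM r), muN r lam pi n a b ∧
        ((u = lam z (opA r lam pi a c) ∧ v = lam z (opA r lam pi b c)) ∨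
         (u = (lam z)⁻¹ (opA r lam pi a c) ∧ v = (lam z)⁻¹ (opA r lam pi b c)))
    else
      fun u v =>
        (∃ c d a b : AM r, muN r lam pi n a b ∧ u = c + a + d ∧ v = c + b + d) ∨
        (∃ c : AM r, muN r lam pi n (c + u) (c + v))

/-- `μ = ⋃_{n ≥ 0} μ_n`. -/
def muRel (r : X × X → X × X) (lam : SM r →* AddAut (AM r)) (pi : SM r ≃ AM r) :
    AM r → AM r → Prop :=
  fun a b => ∃ n, muN r lam pi n a b

end MuDefs

section MuLemmas

variable {X : Type*} (r : X × X → X × X) (lam : SM r →* AddAut (AM r)) (pi : SM r ≃ AM r)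

lemma muN_succ_eq_transGen (n : ℕ) (h : n % 4 = 0 ∨ n % 4 = 2) :
    muN r lam pi (n + 1) = Relation.TransGen (muN r lam pi n) := by
  simp only [muN, if_pos h]

lemma muN_succ_eq_lam (n : ℕ) (h : n % 4 = 1) :
    muN r lam pi (n + 1) = fun u v => ∃ (z : SM r) (c a b : AM r), muN r lam pi n a b ∧
        ((u = lam z (opA r lam pi a c) ∧ v = lam z (opA r lam pi b c)) ∨
         (u = (lam z)⁻¹ (opA r lam pi a c) ∧ v = (lam z)⁻¹ (opA r lam pi b c))) := by
  have h1 : ¬(n % 4 = 0 ∨ n % 4 = 2) := by omega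
  simp only [muN, if_neg h1, if_pos h]

lemma muN_succ_eq_add (n : ℕ) (h : n % 4 = 3) :
    muN r lam pi (n + 1) = fun u v =>
        (∃ c d a b : AM r, muN r lam pi n a b ∧ u = c + a + d ∧ v = c + b + d) ∨
        (∃ c : AM r, muN r lam pi n (c + u) (c + v)) := by
  have h1 : ¬(n % 4 = 0 ∨ n % 4 = 2) := by omega
  have h2 : ¬(n % 4 = 1) := by omega
  simp only [muN, if_neg h1, if_neg h2]

lemma opA_zero (a : AM r) : opA r lam pi a 0 = a := by
  simp [opA]

lemma muN_mono (n : ℕ) {a b : AM r} (h : muN r lam pi n a b) :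
    muN r lam pi (n + 1) a b := by
  have h4 : n % 4 = 0 ∨ n % 4 = 1 ∨ n % 4 = 2 ∨ n % 4 = 3 := by omega
  rcases h4 with h0 | h1 | h2 | h3
  · rw [muN_succ_eq_transGen r lam pi n (Or.inl h0)]; exact .single h
  · rw [muN_succ_eq_lam r lam pi n h1]
    exact ⟨1, 0, a, b, h,
      Or.inl ⟨by simp [opA_zero]; rfl, by simp [opA_zero]; rfl⟩⟩
  · rw [muN_succ_eq_transGen r lam pi n (Or.inr h2)]; exact .single h
  · rw [muN_succ_eq_add r lam pi n h3]
    exact Or.inl ⟨0, 0, a, b, h, by simp, by simp⟩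

lemma muN_le {n m : ℕ} (hnm : n ≤ m) {a b : AM r} (h : muN r lam pi n a b) :
    muN r lam pi m a b := by
  induction hnm with
  | refl => exact h
  | step _ ih => exact muN_mono r lam pi _ ih

lemma muN_symm : ∀ (n : ℕ) {a b : AM r}, muN r lam pi n a b → muN r lam pi n b a := by
  intro n
  induction n with
  | zero =>
    intro a b h
    obtain ⟨c, hc⟩ := h
    exact ⟨c, hc.symm⟩
  | succ n ih =>
    intro a b h
    have h4 : n % 4 = 0 ∨ n % 4 = 1 ∨ n % 4 = 2 ∨ n % 4 = 3 := by omega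
    rcases h4 with h0 | h1 | h2 | h3
    · rw [muN_succ_eq_transGen r lam pi n (Or.inl h0)] at h ⊢
      induction h with
      | single h => exact .single (ih h)
      | tail _ hbc ih2 => exact Relation.TransGen.head (ih hbc) ih2
    · rw [muN_succ_eq_lam r lam pi n h1] at h ⊢
      obtain ⟨z, c, a', b', hab, hd⟩ := h
      exact ⟨z, c, b', a', ih hab,
        hd.imp (fun ⟨hu, hv⟩ => ⟨hv, hu⟩) (fun ⟨hu, hv⟩ => ⟨hv, hu⟩)⟩
    · rw [muN_succ_eq_transGen r lam pi n (Or.inr h2)] at h ⊢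
      induction h with
      | single h => exact .single (ih h)
      | tail _ hbc ih2 => exact Relation.TransGen.head (ih hbc) ih2
    · rw [muN_succ_eq_add r lam pi n h3] at h ⊢
      rcases h with ⟨c, d, a', b', hab, hu, hv⟩ | ⟨c, hc⟩
      · exact Or.inl ⟨c, d, b', a', ih hab, hv, hu⟩
      · exact Or.inr ⟨c, ih hc⟩

lemma muRel_refl (a : AM r) : muRel r lam pi a a := ⟨0, 0, rfl⟩

lemma muRel_symm {a b : AM r} (h : muRel r lam pi a b) : muRel r lam pi b a := by
  obtain ⟨n, h⟩ := h
  exact ⟨n, muN_symm r lam pi n h⟩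

lemma muRel_trans {a b c : AM r} (h1 : muRel r lam pi a b) (h2 : muRel r lam pi b c) :
    muRel r lam pi a c := by
  obtain ⟨n, h1⟩ := h1
  obtain ⟨m, h2⟩ := h2
  set N := max n m with hN
  have h1' : muN r lam pi (4 * N + 1) a b := muN_le r lam pi (by omega) h1
  have h2' : muN r lam pi (4 * N + 1) b c := muN_le r lam pi (by omega) h2
  rw [muN_succ_eq_transGen r lam pi (4 * N) (Or.inl (Nat.mul_mod_right 4 N))] at h1' h2'
  exact ⟨4 * N + 1, by
    rw [muN_succ_eq_transGen r lam pi (4 * N) (Or.inl (Nat.mul_mod_right 4 N))]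
    exact h1'.trans h2'⟩

lemma muRel_lam (z : SM r) {a b : AM r} (h : muRel r lam pi a b) :
    muRel r lam pi (lam z a) (lam z b) ∧
    muRel r lam pi ((lam z)⁻¹ a) ((lam z)⁻¹ b) := by
  obtain ⟨n, h⟩ := h
  have h' : muN r lam pi (4 * n + 1) a b := muN_le r lam pi (by omega) h
  constructor
  · refine ⟨4 * n + 1 + 1, ?_⟩
    rw [muN_succ_eq_lam r lam pi (4 * n + 1) (by omega)]
    exact ⟨z, 0, a, b, h', Or.inl ⟨by rw [opA_zero], by rw [opA_zero]⟩⟩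
  · refine ⟨4 * n + 1 + 1, ?_⟩
    rw [muN_succ_eq_lam r lam pi (4 * n + 1) (by omega)]
    exact ⟨z, 0, a, b, h', Or.inr ⟨by rw [opA_zero], by rw [opA_zero]⟩⟩

lemma muRel_add (e f : AM r) {a b : AM r} (h : muRel r lam pi a b) :
    muRel r lam pi (e + a + f) (e + b + f) := by
  obtain ⟨n, h⟩ := h
  have h' : muN r lam pi (4 * n + 3) a b := muN_le r lam pi (by omega) h
  refine ⟨4 * n + 3 + 1, ?_⟩
  rw [muN_succ_eq_add r lam pi (4 * n + 3) (by omega)]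
  exact Or.inl ⟨e, f, a, b, h', rfl, rfl⟩

lemma muRel_cancel (e : AM r) {a b : AM r} (h : muRel r lam pi (e + a) (e + b)) :
    muRel r lam pi a b := by
  obtain ⟨n, h⟩ := h
  have h' : muN r lam pi (4 * n + 3) (e + a) (e + b) := muN_le r lam pi (by omega) h
  refine ⟨4 * n + 3 + 1, ?_⟩
  rw [muN_succ_eq_add r lam pi (4 * n + 3) (by omega)]
  exact Or.inr ⟨e, h'⟩

lemma muRel_op (e : AM r) {a b : AM r} (h : muRel r lam pi a b) :
    muRel r lam pi (opA r lam pi a e) (opA r lam pi b e) := by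
  obtain ⟨n, h⟩ := h
  have h' : muN r lam pi (4 * n + 1) a b := muN_le r lam pi (by omega) h
  refine ⟨4 * n + 1 + 1, ?_⟩
  rw [muN_succ_eq_lam r lam pi (4 * n + 1) (by omega)]
  exact ⟨1, e, a, b, h', Or.inl ⟨by simp; rfl, by simp; rfl⟩⟩

lemma lam_congr {c d : AM r} (h : muRel r lam pi c d) (b : AM r) :
    muRel r lam pi (lamA r lam pi c b) (lamA r lam pi d b) := by
  have h1 : muRel r lam pi (c + lamA r lam pi c b) (d + lamA r lam pi d b) :=
    muRel_op r lam pi b h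
  have h2 : muRel r lam pi (c + lamA r lam pi d b) (d + lamA r lam pi d b) := by
    have := muRel_add r lam pi 0 (lamA r lam pi d b) h
    simpa using this
  exact muRel_cancel r lam pi c
    (muRel_trans r lam pi h1 (muRel_symm r lam pi h2))

lemma lam_inv_congr {c d : AM r} (h : muRel r lam pi c d) (b : AM r) :
    muRel r lam pi ((lamA r lam pi c)⁻¹ b) ((lamA r lam pi d)⁻¹ b) := by
  set u := (lamA r lam pi c)⁻¹ b with hu
  set v := (lamA r lam pi d)⁻¹ b with hv
  have h1 : muRel r lam pi (lamA r lam pi c v) (lamA r lam pi d v) :=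
    lam_congr r lam pi h v
  have h2 : lamA r lam pi d v = b := by
    rw [hv]; exact (lamA r lam pi d).apply_symm_apply b
  have h3 : lamA r lam pi c u = b := by
    rw [hu]; exact (lamA r lam pi c).apply_symm_apply b
  have h4 : muRel r lam pi (lamA r lam pi c v) (lamA r lam pi c u) := by
    rw [h2, ← h3] at h1; exact h1
  have h5 := (muRel_lam r lam pi (pi.symm c) h4).2
  have h6 : (lam (pi.symm c))⁻¹ (lamA r lam pi c v) = v := by
    show (lamA r lam pi c)⁻¹ (lamA r lam pi c v) = v
    exact (lamA r lam pi c).symm_apply_apply v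
  have h7 : (lam (pi.symm c))⁻¹ (lamA r lam pi c u) = u := by
    show (lamA r lam pi c)⁻¹ (lamA r lam pi c u) = u
    exact (lamA r lam pi c).symm_apply_apply u
  rw [h6, h7] at h5
  exact muRel_symm r lam pi h5

end MuLemmas

/-- For all `(a,b) ∈ μ` and `(c,d) ∈ μ` one has `(λ'_c(a), λ'_d(b)) ∈ μ` and
`((λ'_c)⁻¹(a), (λ'_d)⁻¹(b)) ∈ μ`. -/
theorem mu_lam_compatible {X : Type*} (r : X × X → X × X)
    (hYBE : IsYBE r) (hLND : IsLeftND r)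
(lam : SM r →* AddAut (AM r))
    (hlamX : ∀ x y : X, lam (ofSM r x) (ofAM r y) = ofAM r (ybeSigma r x y))
    (pi : SM r ≃ AM r)
    (hpiX : ∀ x : X, pi (ofSM r x) = ofAM r x)
    (hpi : ∀ a b : SM r, pi (a * b) = pi a + lam a (pi b)) :
    ∀ a b c d : AM r, muRel r lam pi a b → muRel r lam pi c d →
      muRel r lam pi (lamA r lam pi c a) (lamA r lam pi d b) ∧
      muRel r lam pi ((lamA r lam pi c)⁻¹ a) ((lamA r lam pi d)⁻¹ b) := by
  intro a b c d hab hcd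
  constructor
  · have h1 : muRel r lam pi (lamA r lam pi c a) (lamA r lam pi c b) :=
      (muRel_lam r lam pi (pi.symm c) hab).1
    exact muRel_trans r lam pi h1 (lam_congr r lam pi hcd b)
  · have h1 : muRel r lam pi ((lamA r lam pi c)⁻¹ a) ((lamA r lam pi c)⁻¹ b) :=
      (muRel_lam r lam pi (pi.symm c) hab).2
    exact muRel_trans r lam pi h1 (lam_inv_congr r lam pi hcd b)
end

section
/- Let (X,r) be a bijective left and right non-degenerate set-theoretic solution of the YBE, M = M(X,r) with its two operations + and ∘, and ν the least left cancellative congruence on (M,∘). Then ν is a congruence on (M,+) and the quotient monoid (M,+)/ν is left cancellative; consequently η ⊆ ν, where η is the least left cancellative congruence on (M,+). -/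
open scoped Classical

section AuxLemmas

variable {X : Type*} (r : X × X → X × X)

/-- Induction principle for the multiplicative structure monoid. -/
lemma sm_induction (P : SM r → Prop) (h1 : P 1)
    (hstep : ∀ (x : X) (a : SM r), P a → P (ofSM r x * a)) :
    ∀ a : SM r, P a := by
  intro a
  refine Con.induction_on a ?_
  intro w
  induction w using FreeMonoid.recOn with
  | one =>
    simpa using h1
  | of_mul x xs ih =>
    have : ((FreeMonoid.of x * xs : FreeMonoid X) : SM r)
        = ofSM r x * (xs : SM r) := by
      rw [Con.coe_mul]; rfl
    rw [this]
    exact hstep x _ ih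

/-- Induction principle for the additive structure monoid. -/
lemma am_induction (P : AM r → Prop) (h0 : P 0)
    (hstep : ∀ (x : X) (a : AM r), P a → P (ofAM r x + a)) :
    ∀ a : AM r, P a := by
  intro a
  refine AddCon.induction_on a ?_
  intro w
  induction w using FreeAddMonoid.recOn with
  | zero =>
    simpa using h0
  | of_add x xs ih =>
    have : ((FreeAddMonoid.of x + xs : FreeAddMonoid X) : AM r)
        = ofAM r x + (xs : AM r) := by
      rw [AddCon.coe_add]; rfl
    rw [this]
    exact hstep x _ ih

/-- The defining relation of the derived (additive) structure monoid. -/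
lemma am_rel (x y : X) :
    ofAM r x + ofAM r y = ofAM r y + ofAM r ((derivedR r (x, y)).2) := by
  have h1 : ofAM r x + ofAM r y
      = ((FreeAddMonoid.of x + FreeAddMonoid.of y : FreeAddMonoid X) : AM r) := by
    rw [AddCon.coe_add]; rfl
  have h2 : ofAM r y + ofAM r ((derivedR r (x, y)).2)
      = ((FreeAddMonoid.of y + FreeAddMonoid.of ((derivedR r (x, y)).2) :
          FreeAddMonoid X) : AM r) := by
    rw [AddCon.coe_add]; rfl
  rw [h1, h2]
  rw [AddCon.eq]
  exact AddConGen.Rel.of _ _ ⟨x, y, rfl, rfl⟩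

/-- Surjectivity of the derived maps `x ↦ σ_y γ_{σ_x⁻¹(y)}(x)`. -/
lemma gval_surj (hLND : IsLeftND r) (hbij : Function.Bijective r) (y z : X) :
    ∃ x : X, (derivedR r (x, y)).2 = z := by
  haveI : Nonempty X := ⟨y⟩
  obtain ⟨w, hw⟩ := (hLND y).2 z
  obtain ⟨⟨x₀, y₀⟩, hP⟩ := hbij.2 (y, w)
  have hs : ybeSigma r x₀ y₀ = y := by
    have := congrArg Prod.fst hP
    simpa [ybeSigma] using this
  have hg : ybeGamma r y₀ x₀ = w := by
    have := congrArg Prod.snd hP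
    simpa [ybeGamma] using this
  refine ⟨x₀, ?_⟩
  have hinv : Function.invFun (ybeSigma r x₀) y = y₀ := by
    rw [← hs]
    exact Function.leftInverse_invFun (hLND x₀).1 y₀
  show ybeSigma r y (ybeGamma r (Function.invFun (ybeSigma r x₀) y) x₀) = z
  rw [hinv, hg, hw]

/-- First component of the Yang–Baxter equation:
`σ_{σ_x y} (σ_{γ_y x} z) = σ_x (σ_y z)`. -/
lemma ybe_comp1 (hYBE : IsYBE r) (x y z : X) :
    ybeSigma r (ybeSigma r x y) (ybeSigma r (ybeGamma r y x) z)
      = ybeSigma r x (ybeSigma r y z) := by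
  have h := congrFun hYBE (x, y, z)
  simp only [Function.comp, yb12, yb23] at h
  have := congrArg Prod.fst h
  simpa [ybeSigma, ybeGamma] using this

/-- Surjectivity of the diagonal map: every `x` is of the form `σ_y⁻¹(y)`. -/
lemma diag_surj (hYBE : IsYBE r) (hLND : IsLeftND r) (hRND : IsRightND r) (x : X) :
    ∃ y : X, ybeSigma r y x = y := by
  obtain ⟨x₀, hx₀⟩ := (hRND x).2 x
  refine ⟨ybeSigma r x₀ x, ?_⟩
  obtain ⟨w, hw⟩ := (hLND x).2 x
  have h := ybe_comp1 r hYBE x₀ x w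
  rw [hx₀, hw] at h
  exact h

/-- Solving `a + b = b + c` for `a`, given `b` a generator. -/
lemma move_gen (hLND : IsLeftND r) (hbij : Function.Bijective r) (y : X) :
    ∀ c : AM r, ∃ a : AM r, a + ofAM r y = ofAM r y + c := by
  refine am_induction r _ ⟨0, by rw [zero_add, add_zero]⟩ ?_
  rintro z c' ⟨a', ha'⟩
  obtain ⟨x, hx⟩ := gval_surj r hLND hbij y z
  refine ⟨ofAM r x + a', ?_⟩
  calc (ofAM r x + a') + ofAM r y = ofAM r x + (a' + ofAM r y) := by rw [add_assoc]
    _ = ofAM r x + (ofAM r y + c') := by rw [ha']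
    _ = (ofAM r x + ofAM r y) + c' := by rw [add_assoc]
    _ = (ofAM r y + ofAM r ((derivedR r (x, y)).2)) + c' := by rw [am_rel]
    _ = (ofAM r y + ofAM r z) + c' := by rw [hx]
    _ = ofAM r y + (ofAM r z + c') := by rw [add_assoc]

/-- Solving `a + b = b + c` for `a`, for arbitrary `b, c`. -/
lemma move (hLND : IsLeftND r) (hbij : Function.Bijective r) :
    ∀ b c : AM r, ∃ a : AM r, a + b = b + c := by
  have key : ∀ b : AM r, ∀ c : AM r, ∃ a : AM r, a + b = b + c := by
    refine am_induction r _ (fun c => ⟨c, by rw [add_zero, zero_add]⟩) ?_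
    rintro y b' IH c
    obtain ⟨a₁, ha₁⟩ := IH c
    obtain ⟨a, ha⟩ := move_gen r hLND hbij y a₁
    refine ⟨a, ?_⟩
    calc a + (ofAM r y + b') = (a + ofAM r y) + b' := by rw [add_assoc]
      _ = (ofAM r y + a₁) + b' := by rw [ha]
      _ = ofAM r y + (a₁ + b') := by rw [add_assoc]
      _ = ofAM r y + (b' + c) := by rw [ha₁]
      _ = (ofAM r y + b') + c := by rw [add_assoc]
  exact key

end AuxLemmas

/-- For a bijective left and right non-degenerate solution, `ν` is a congruence
on `(M,+)` with left cancellative quotient; consequently `η ⊆ ν`. Here `+` on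
`M` is the addition transported from `A(X,r)` via the identification `π`. -/
theorem nu_add_congruence_leftCancel {X : Type*} (r : X × X → X × X)
    (hYBE : IsYBE r) (hLND : IsLeftND r) (hRND : IsRightND r)
    (hbij : Function.Bijective r)
(lam : SM r →* Multiplicative (AddAut (AM r)))
    (hlamX : ∀ x y : X, (Multiplicative.toAdd (lam (ofSM r x))) (ofAM r y) = ofAM r (ybeSigma r x y))
    (pi : SM r ≃ AM r)
    (hpiX : ∀ x : X, pi (ofSM r x) = ofAM r x)
    (hpi : ∀ a b : SM r, pi (a * b) = pi a + (Multiplicative.toAdd (lam a)) (pi b))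
(eta : AddCon (AM r))
    (heta : IsLeast {c : AddCon (AM r) | ∀ z a b : AM r, c (z + a) (z + b) → c a b} eta)
(nu : Con (SM r))
    (hnu : IsLeast {c : Con (SM r) | ∀ z a b : SM r, c (z * a) (z * b) → c a b} nu) :
    (∀ a b c d : SM r, nu a b → nu c d →
      nu (pi.symm (pi a + pi c)) (pi.symm (pi b + pi d))) ∧
    (∀ z a b : SM r,
      nu (pi.symm (pi z + pi a)) (pi.symm (pi z + pi b)) → nu a b) ∧
    (∀ a b : SM r, eta (pi a) (pi b) → nu a b) := by
  classical
  letI : Group (AddAut (AM r)) := (inferInstance : Group (Multiplicative (AddAut (AM r))))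
  have hmulap : ∀ (f g : AddAut (AM r)) (x : AM r), (f * g) x = f (g x) := fun _ _ _ => rfl
  obtain ⟨lam, hlamX, hpi⟩ : ∃ lam' : SM r →* AddAut (AM r),
      (∀ x y : X, lam' (ofSM r x) (ofAM r y) = ofAM r (ybeSigma r x y)) ∧
      (∀ a b : SM r, pi (a * b) = pi a + lam' a (pi b)) :=
    ⟨{ toFun := fun a => Multiplicative.toAdd (lam a)
       map_one' := by rw [map_one]; rfl
       map_mul' := fun a b => by rw [map_mul]; rfl }, hlamX, hpi⟩
  -- generators map to generators under each `lam z`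
  have A2 : ∀ z : SM r, ∀ x : X, ∃ x' : X, lam z (ofAM r x) = ofAM r x' := by
    refine sm_induction r _ ?_ ?_
    · intro x
      exact ⟨x, by rw [map_one]; rfl⟩
    · rintro y z IH x
      obtain ⟨x₁, hx₁⟩ := IH x
      refine ⟨ybeSigma r y x₁, ?_⟩
      rw [map_mul, hmulap, hx₁, hlamX]
  -- surjectivity of the "diagonal" `n ↦ (lam n)⁻¹ (pi n)` of the monoid
  have C6 : ∀ κ : AM r, ∃ n : SM r, lam n κ = pi n := by
    refine am_induction r _ ?_ ?_
    · exact ⟨pi.symm 0, by rw [map_zero, Equiv.apply_symm_apply]⟩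
    · rintro x κ' ⟨n', hn'⟩
      obtain ⟨x', hx'⟩ := A2 n' x
      obtain ⟨y, hy⟩ := diag_surj r hYBE hLND hRND x'
      refine ⟨ofSM r y * n', ?_⟩
      rw [map_mul, hmulap, map_add, hx', hn', map_add, hlamX, hy,
        hpi, hpiX]
  -- witnessed equalities give `nu`
  have hWnu : ∀ w a b : SM r, w * a = w * b → nu a b := by
    intro w a b h
    exact hnu.1 w a b (h ▸ nu.refl (w * a))
  -- the explicit left-cancellative congruence R
  set Rrel : SM r → SM r → Prop :=
    fun a b => (∃ κ : AM r, κ + pi a = κ + pi b) ∧ lam a = lam b with hRrel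
  have hRrefl : ∀ a, Rrel a a := fun a => ⟨⟨0, rfl⟩, rfl⟩
  have hRsymm : ∀ {a b}, Rrel a b → Rrel b a := by
    rintro a b ⟨⟨κ, hκ⟩, hl⟩
    exact ⟨⟨κ, hκ.symm⟩, hl.symm⟩
  have hRtrans : ∀ {a b c}, Rrel a b → Rrel b c → Rrel a c := by
    rintro a b c ⟨⟨κ₁, hκ₁⟩, hl₁⟩ ⟨⟨κ₂, hκ₂⟩, hl₂⟩
    obtain ⟨β, hβ⟩ := move r hLND hbij κ₂ κ₁
    refine ⟨⟨β + κ₂, ?_⟩, hl₁.trans hl₂⟩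
    calc (β + κ₂) + pi a = (κ₂ + κ₁) + pi a := by rw [hβ]
      _ = κ₂ + (κ₁ + pi a) := by rw [add_assoc]
      _ = κ₂ + (κ₁ + pi b) := by rw [hκ₁]
      _ = (κ₂ + κ₁) + pi b := by rw [add_assoc]
      _ = (β + κ₂) + pi b := by rw [hβ]
      _ = β + (κ₂ + pi b) := by rw [add_assoc]
      _ = β + (κ₂ + pi c) := by rw [hκ₂]
      _ = (β + κ₂) + pi c := by rw [add_assoc]
  have hRleft : ∀ (z : SM r) {a b}, Rrel a b → Rrel (z * a) (z * b) := by
    rintro z a b ⟨⟨κ, hκ⟩, hl⟩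
    constructor
    · obtain ⟨η, hη⟩ := move r hLND hbij (lam z κ) (pi z)
      refine ⟨lam z κ, ?_⟩
      calc lam z κ + pi (z * a) = lam z κ + (pi z + lam z (pi a)) := by rw [hpi]
        _ = (lam z κ + pi z) + lam z (pi a) := by rw [add_assoc]
        _ = (η + lam z κ) + lam z (pi a) := by rw [hη]
        _ = η + (lam z κ + lam z (pi a)) := by rw [add_assoc]
        _ = η + lam z (κ + pi a) := by rw [map_add]
        _ = η + lam z (κ + pi b) := by rw [hκ]
        _ = η + (lam z κ + lam z (pi b)) := by rw [map_add]
        _ = (η + lam z κ) + lam z (pi b) := by rw [add_assoc]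
        _ = (lam z κ + pi z) + lam z (pi b) := by rw [hη]
        _ = lam z κ + (pi z + lam z (pi b)) := by rw [add_assoc]
        _ = lam z κ + pi (z * b) := by rw [hpi]
    · rw [map_mul, map_mul, hl]
  have hRright : ∀ {a b} (z : SM r), Rrel a b → Rrel (a * z) (b * z) := by
    rintro a b z ⟨⟨κ, hκ⟩, hl⟩
    constructor
    · refine ⟨κ, ?_⟩
      calc κ + pi (a * z) = κ + (pi a + lam a (pi z)) := by rw [hpi]
        _ = (κ + pi a) + lam a (pi z) := by rw [add_assoc]
        _ = (κ + pi b) + lam a (pi z) := by rw [hκ]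
        _ = (κ + pi b) + lam b (pi z) := by rw [hl]
        _ = κ + (pi b + lam b (pi z)) := by rw [add_assoc]
        _ = κ + pi (b * z) := by rw [hpi]
    · rw [map_mul, map_mul, hl]
  let R : Con (SM r) :=
    { r := Rrel
      iseqv := ⟨hRrefl, hRsymm, hRtrans⟩
      mul' := fun {w x y z} h₁ h₂ => hRtrans (hRright y h₁) (hRleft x h₂) }
  have hRS : R ∈ {c : Con (SM r) | ∀ z a b : SM r, c (z * a) (z * b) → c a b} := by
    rintro z a b ⟨⟨κ, hκ⟩, hl⟩
    constructor
    · refine ⟨(lam z).symm κ + (lam z).symm (pi z), ?_⟩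
      have h1 : (κ + pi z) + lam z (pi a) = (κ + pi z) + lam z (pi b) := by
        calc (κ + pi z) + lam z (pi a) = κ + (pi z + lam z (pi a)) := by rw [add_assoc]
          _ = κ + pi (z * a) := by rw [hpi]
          _ = κ + pi (z * b) := hκ
          _ = κ + (pi z + lam z (pi b)) := by rw [hpi]
          _ = (κ + pi z) + lam z (pi b) := by rw [add_assoc]
      have h2 := congrArg (lam z).symm h1
      simp only [map_add, AddEquiv.symm_apply_apply] at h2
      exact h2
    · have : lam z * lam a = lam z * lam b := by
        rw [← map_mul, ← map_mul, hl]
      exact mul_left_cancel this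
  have hnuR : ∀ {a b : SM r}, nu a b → Rrel a b := by
    intro a b h
    exact hnu.2 hRS h
  -- Goal 1: nu is compatible with +
  have G1 : ∀ a b c d : SM r, nu a b → nu c d →
      nu (pi.symm (pi a + pi c)) (pi.symm (pi b + pi d)) := by
    intro a b c d hab hcd
    obtain ⟨⟨κ₁, hκ₁⟩, -⟩ := hnuR hab
    obtain ⟨⟨κ₂, hκ₂⟩, -⟩ := hnuR hcd
    obtain ⟨ξ, hξ⟩ := move r hLND hbij κ₂ (κ₁ + pi b)
    obtain ⟨f, hf⟩ := C6 (κ₂ + κ₁)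
    have hinner : (κ₂ + κ₁) + (pi a + pi c) = (κ₂ + κ₁) + (pi b + pi d) := by
      calc (κ₂ + κ₁) + (pi a + pi c) = κ₂ + (κ₁ + (pi a + pi c)) := add_assoc _ _ _
        _ = κ₂ + ((κ₁ + pi a) + pi c) := by rw [← add_assoc κ₁ (pi a) (pi c)]
        _ = κ₂ + ((κ₁ + pi b) + pi c) := by rw [hκ₁]
        _ = κ₂ + (κ₁ + pi b) + pi c := (add_assoc _ _ _).symm
        _ = ξ + κ₂ + pi c := by rw [← hξ]
        _ = ξ + (κ₂ + pi c) := add_assoc _ _ _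
        _ = ξ + (κ₂ + pi d) := by rw [hκ₂]
        _ = ξ + κ₂ + pi d := (add_assoc _ _ _).symm
        _ = κ₂ + (κ₁ + pi b) + pi d := by rw [hξ]
        _ = κ₂ + ((κ₁ + pi b) + pi d) := add_assoc _ _ _
        _ = κ₂ + (κ₁ + (pi b + pi d)) := by rw [add_assoc κ₁ (pi b) (pi d)]
        _ = (κ₂ + κ₁) + (pi b + pi d) := (add_assoc _ _ _).symm
    have key : pi (f * pi.symm (pi a + pi c)) = pi (f * pi.symm (pi b + pi d)) := by
      rw [hpi, hpi, Equiv.apply_symm_apply, Equiv.apply_symm_apply]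
      calc pi f + lam f (pi a + pi c)
          = lam f (κ₂ + κ₁) + lam f (pi a + pi c) := by rw [hf]
        _ = lam f ((κ₂ + κ₁) + (pi a + pi c)) := (map_add _ _ _).symm
        _ = lam f ((κ₂ + κ₁) + (pi b + pi d)) := by rw [hinner]
        _ = lam f (κ₂ + κ₁) + lam f (pi b + pi d) := map_add _ _ _
        _ = pi f + lam f (pi b + pi d) := by rw [hf]
    exact hWnu f _ _ (pi.injective key)
  -- Goal 2: the quotient is left cancellative for +
  have G2 : ∀ z a b : SM r,
      nu (pi.symm (pi z + pi a)) (pi.symm (pi z + pi b)) → nu a b := by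
    intro z a b h
    obtain ⟨⟨κ, hκ⟩, -⟩ := hnuR h
    rw [Equiv.apply_symm_apply, Equiv.apply_symm_apply] at hκ
    have hκ' : (κ + pi z) + pi a = (κ + pi z) + pi b := by
      rw [add_assoc, add_assoc]; exact hκ
    obtain ⟨w, hw⟩ := C6 (κ + pi z)
    have key : pi (w * a) = pi (w * b) := by
      rw [hpi, hpi]
      calc pi w + lam w (pi a) = lam w (κ + pi z) + lam w (pi a) := by rw [hw]
        _ = lam w ((κ + pi z) + pi a) := (map_add _ _ _).symm
        _ = lam w ((κ + pi z) + pi b) := by rw [hκ']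
        _ = lam w (κ + pi z) + lam w (pi b) := map_add _ _ _
        _ = pi w + lam w (pi b) := by rw [hw]
    exact hWnu w _ _ (pi.injective key)
  refine ⟨G1, G2, ?_⟩
  -- Goal 3: eta ⊆ nu
  let c₀ : AddCon (AM r) :=
    { r := fun u v => nu (pi.symm u) (pi.symm v)
      iseqv := ⟨fun u => nu.refl _, fun h => nu.symm h, fun h₁ h₂ => nu.trans h₁ h₂⟩
      add' := by
        intro w x y z h₁ h₂
        have := G1 (pi.symm w) (pi.symm x) (pi.symm y) (pi.symm z) h₁ h₂
        simpa only [Equiv.apply_symm_apply] using this }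
  have hc₀ : c₀ ∈ {c : AddCon (AM r) | ∀ z a b : AM r, c (z + a) (z + b) → c a b} := by
    intro ζ u v h
    have := G2 (pi.symm ζ) (pi.symm u) (pi.symm v)
    apply this
    have h' : nu (pi.symm (ζ + u)) (pi.symm (ζ + v)) := h
    simpa only [Equiv.apply_symm_apply] using h'
  intro a b h
  have hle := heta.2 hc₀
  have h2 : nu (pi.symm (pi a)) (pi.symm (pi b)) := hle h
  simpa only [Equiv.symm_apply_apply] using h2
end
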